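/- arXiv:1612.08559 — 2 statements merged into one kernel-verified Lean document; each statement's English description precedes it below -/
import Mathlib

section
/- Suppose H is a hypergraph all of whose edges have at most k vertices. Let X = e(H_p) and, for r > 0, let X_r = max{e(G) : G ⊆ H_p, Δ₁(G) ≤ r}. Then for all p ∈ [0,1] and r > 0 the following deterministic inequalities hold (pointwise on the underlying probability space): X_r ≤ X ≤ X_r + 1{Δ₁(H_p) > r}·k·⌈r⌉·M_r(H_p)·Δ₁(H_p). -/
open MeasureTheory Real
open scoped ENNReal Classical

noncomputable section

namespace UT

/-- `φ(x) = (1+x)·log(1+x) − x`. -/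
def phi (x : ℝ) : ℝ := (1 + x) * Real.log (1 + x) - x

/-- Bernoulli measure on `Bool` with success probability `p` (intended for `p ∈ [0,1]`). -/
def bern (p : ℝ) : Measure Bool :=
  (PMF.bernoulli (min (Real.toNNReal p) 1) (min_le_right _ _)).toMeasure

instance (p : ℝ) : IsProbabilityMeasure (bern p) := by
  unfold bern; infer_instance

/-- The Bernoulli(`p`) product measure on subsets of `V` (encoded as `V → Bool`):
each vertex is kept independently with probability `p`. -/
def perc (V : Type) [Fintype V] (p : ℝ) : Measure (V → Bool) :=
  Measure.pi fun _ => bern p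

/-- The edge set of the induced random subhypergraph `H_p`, for the outcome `ω`. -/
def HpEdges {V : Type} (H : Finset (Finset V)) (ω : V → Bool) : Finset (Finset V) :=
  H.filter fun e => ∀ v ∈ e, ω v = true

/-- `X = e(H_p)`, the number of induced edges, as a real-valued random variable. -/
def XE {V : Type} (H : Finset (Finset V)) (ω : V → Bool) : ℝ :=
  ((HpEdges H ω).card : ℝ)

/-- `μ = E e(H_p)`. -/
def mu {V : Type} [Fintype V] (H : Finset (Finset V)) (p : ℝ) : ℝ :=
  ∫ ω, XE H ω ∂(perc V p)

/-- `Pr(e(H_p) ≥ c)`. -/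
def pr {V : Type} [Fintype V] (H : Finset (Finset V)) (p c : ℝ) : ℝ :=
  (perc V p {ω | c ≤ XE H ω}).toReal

/-- `Var e(H_p)`. -/
def hvar {V : Type} [Fintype V] (H : Finset (Finset V)) (p : ℝ) : ℝ :=
  ProbabilityTheory.variance (XE H) (perc V p)

/-- `Δ_j(H)`: the maximum, over `j`-element vertex sets `S`, of the number of edges
of `H` containing `S`. -/
def maxDegj {V : Type} [Fintype V] (H : Finset (Finset V)) (j : ℕ) : ℕ :=
  (Finset.univ.filter fun S : Finset V => S.card = j).sup fun S =>
    (H.filter fun f => S ⊆ f).card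

/-- Property `𝔛(H, D, x)`: there is `W ⊆ V(H)` with `|W| ≤ D·max{√x, 1}` and
`e(H[W]) ≥ x`. -/
def propX {V : Type} [Fintype V] (H : Finset (Finset V)) (D x : ℝ) : Prop :=
  ∃ W : Finset V, (W.card : ℝ) ≤ D * max (Real.sqrt x) 1 ∧
    x ≤ ((H.filter fun e => e ⊆ W).card : ℝ)

/-- The degree `|Γ_v(G)|` of vertex `v` in the hypergraph `G`. -/
def deg {V : Type} (G : Finset (Finset V)) (v : V) : ℕ :=
  (G.filter fun f => v ∈ f).card

/-- `Δ₁(G)`, the maximum vertex degree. -/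
def maxDeg {V : Type} [Fintype V] (G : Finset (Finset V)) : ℕ :=
  Finset.univ.sup (deg G)

/-- The vertex set of a star: the union of its edges. -/
def starVtx {V : Type} (W : Finset (Finset V)) : Finset V := W.sup id

/-- `M_r(G)`: the maximum size of a collection of `r`-stars in `G` whose vertex sets
are pairwise disjoint. An `r`-star is a pair `S = (v, W)` with `W ⊆ Γ_v(G)` and
`|W| = ⌈r⌉`. -/
def Mr {V : Type} (G : Finset (Finset V)) (r : ℝ) : ℕ :=
  sSup { m : ℕ | ∃ M : Finset (V × Finset (Finset V)),
    (∀ S ∈ M, S.2 ⊆ G.filter (fun f => S.1 ∈ f) ∧ S.2.card = Nat.ceil r) ∧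
    (∀ S ∈ M, ∀ T ∈ M, S ≠ T → Disjoint (starVtx S.2) (starVtx T.2)) ∧
    m = M.card }

/-- `X_r`: the maximum number of edges of a subhypergraph `G ⊆ H_p` with maximum
degree `Δ₁(G) ≤ r`. -/
def Xr {V : Type} (H : Finset (Finset V)) (r : ℝ) (ω : V → Bool) : ℝ :=
  sSup { z : ℝ | ∃ G : Finset (Finset V), G ⊆ HpEdges H ω ∧
    (∀ v : V, (deg G v : ℝ) ≤ r) ∧ z = (G.card : ℝ) }

/-- `s = log(e/p^γ)`. -/
def sP (p γ : ℝ) : ℝ := Real.log (Real.exp 1 / p ^ γ)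

/-- The event `𝒯(β, γ, r, t)` (with `r_j = 2^j·r` and `s = log(e/p^γ)`). -/
def eventT {V : Type} (H : Finset (Finset V)) (p β γ r t : ℝ) (ω : V → Bool) : Prop :=
  (∀ j : ℕ, (2:ℝ) ^ j * r < Real.sqrt t / sP p γ →
    ((Mr (HpEdges H ω) ((2:ℝ) ^ j * r) : ℝ) < β * Real.sqrt t * sP p γ / ((2:ℝ) ^ j * r))) ∧
  (∀ j : ℕ, Real.sqrt t / sP p γ ≤ (2:ℝ) ^ j * r →
    ((Mr (HpEdges H ω) ((2:ℝ) ^ j * r) : ℝ) < β * Real.sqrt t / ((2:ℝ) ^ j * r)))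

/-- `s` is an arithmetic progression of length `k` in `{0, 1, …, n−1}`. -/
def isAP (k n : ℕ) (s : Finset (Fin n)) : Prop :=
  ∃ a d : ℕ, 0 < d ∧
    s.image (fun x : Fin n => (x : ℕ)) = (Finset.range k).image fun i => a + i * d

/-- The `k`-uniform hypergraph whose edges are the arithmetic progressions of
length `k` in `{0, 1, …, n−1}` (a copy of `[n]`). -/
def apH (k n : ℕ) : Finset (Finset (Fin n)) :=
  Finset.univ.filter (isAP k n)

/-- `Z_C`: the maximum of `Σ_{α∈J} Y_α` over all `J ⊆ I` satisfying
`max_{β∈J} Σ_{α∈J, α∼β} Y_α ≤ C`. -/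
def ZC {Ω I : Type} [Fintype I] (Y : I → Ω → ℝ) (rel : I → I → Prop) (C : ℝ) (ω : Ω) : ℝ :=
  sSup { z : ℝ | ∃ J : Finset I,
    (∀ β ∈ J, ∑ α ∈ J.filter (fun α => rel α β), Y α ω ≤ C) ∧
    z = ∑ α ∈ J, Y α ω }

/-- `Z`: the maximum number of events occurring with pairwise disjoint certificates. -/
def Zdisj {M : ℕ} {Ω : Fin M → Type} {I : Type} [Fintype I]
    (E : I → Set (∀ i, Ω i)) (ω : ∀ i, Ω i) : ℕ :=
  sSup { m : ℕ | ∃ J : Finset I, ∃ K : I → Finset (Fin M),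
    (∀ α ∈ J, ∀ β ∈ J, α ≠ β → Disjoint (K α) (K β)) ∧
    (∀ α ∈ J, ∀ ω' : ∀ i, Ω i, (∀ i ∈ K α, ω' i = ω i) → ω' ∈ E α) ∧
    m = J.card }

/-!
Take a maximum family `M` of `r`-stars of `H_p` with pairwise disjoint vertex sets, and let `U`
be the union of their vertex sets, so `|U| ≤ k⌈r⌉M_r(H_p)`. In the subhypergraph of edges avoiding
`U` every vertex has degree less than `⌈r⌉`, since otherwise `⌈r⌉` of its edges would form a new
star disjoint from `M`; so these edges count towards `X_r`. The remaining edges meet `U`, and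
there are at most `|U|·Δ₁(H_p)` of them.
-/

section

variable {V : Type}

def IsStarPacking (G : Finset (Finset V)) (r : ℝ) (M : Finset (V × Finset (Finset V))) : Prop :=
  (∀ S ∈ M, S.2 ⊆ G.filter (fun f => S.1 ∈ f) ∧ S.2.card = ⌈r⌉₊) ∧
  (∀ S ∈ M, ∀ T ∈ M, S ≠ T → Disjoint (starVtx S.2) (starVtx T.2))

def packingVtx (M : Finset (V × Finset (Finset V))) : Finset V :=
  M.sup fun S => starVtx S.2

theorem Mr_eq_sSup (G : Finset (Finset V)) (r : ℝ) :
    Mr G r = sSup {m | ∃ M, IsStarPacking G r M ∧ m = M.card} := by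
  simp only [Mr, IsStarPacking, and_assoc]

theorem starVtx_subset_packingVtx {M : Finset (V × Finset (Finset V))} {S : V × Finset (Finset V)}
    (hS : S ∈ M) : starVtx S.2 ⊆ packingVtx M :=
  Finset.le_sup (f := fun S => starVtx S.2) hS

theorem IsStarPacking.insert {G : Finset (Finset V)} {r : ℝ} {M : Finset (V × Finset (Finset V))}
    (hM : IsStarPacking G r M) {v : V} {W : Finset (Finset V)}
    (hW : W ⊆ G.filter (fun f => v ∈ f)) (hWcard : W.card = ⌈r⌉₊)
    (hWU : Disjoint (starVtx W) (packingVtx M)) :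
    IsStarPacking G r (insert (v, W) M) := by
  refine ⟨?_, ?_⟩
  · intro S hS
    rcases Finset.mem_insert.mp hS with rfl | hS
    · exact ⟨hW, hWcard⟩
    · exact hM.1 S hS
  · intro S hS T hT hST
    rcases Finset.mem_insert.mp hS with rfl | hS <;> rcases Finset.mem_insert.mp hT with rfl | hT
    · exact absurd rfl hST
    · exact hWU.mono_right (starVtx_subset_packingVtx hT)
    · exact (hWU.mono_right (starVtx_subset_packingVtx hS)).symm
    · exact hM.2 S hS T hT hST

theorem card_packingVtx_le {G : Finset (Finset V)} {r : ℝ} {M : Finset (V × Finset (Finset V))}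
    (hM : IsStarPacking G r M) {k : ℕ} (hG : ∀ e ∈ G, e.card ≤ k) :
    (packingVtx M).card ≤ M.card * (⌈r⌉₊ * k) := by
  rw [packingVtx, Finset.sup_eq_biUnion]
  refine Finset.card_biUnion_le_card_mul _ _ _ fun S hS => ?_
  rw [starVtx, Finset.sup_eq_biUnion, ← (hM.1 S hS).2]
  exact Finset.card_biUnion_le_card_mul _ _ _ fun e he =>
    hG e (Finset.mem_filter.mp ((hM.1 S hS).1 he)).1

theorem HpEdges_subset (H : Finset (Finset V)) (ω : V → Bool) : HpEdges H ω ⊆ H :=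
  Finset.filter_subset _ _

theorem Xr_le_XE (H : Finset (Finset V)) (r : ℝ) (ω : V → Bool) : Xr H r ω ≤ XE H ω := by
  refine Real.sSup_le ?_ (Nat.cast_nonneg _)
  rintro _ ⟨G, hG, -, rfl⟩
  unfold XE
  exact_mod_cast Finset.card_le_card hG

theorem card_le_Xr {H G : Finset (Finset V)} {r : ℝ} {ω : V → Bool} (hG : G ⊆ HpEdges H ω)
    (hdeg : ∀ v, (deg G v : ℝ) ≤ r) : (G.card : ℝ) ≤ Xr H r ω := by
  refine le_csSup ⟨XE H ω, ?_⟩ ⟨G, hG, hdeg, rfl⟩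
  rintro _ ⟨G', hG', -, rfl⟩
  unfold XE
  exact_mod_cast Finset.card_le_card hG'

variable [Fintype V]

theorem card_le_Mr {G : Finset (Finset V)} {r : ℝ} {M : Finset (V × Finset (Finset V))}
    (hM : IsStarPacking G r M) : M.card ≤ Mr G r := by
  rw [Mr_eq_sSup]
  exact le_csSup ⟨_, fun _ ⟨M', _, hm⟩ => hm ▸ M'.card_le_univ⟩ ⟨M, hM, rfl⟩

theorem exists_isStarPacking_card_eq_Mr (G : Finset (Finset V)) (r : ℝ) :
    ∃ M, IsStarPacking G r M ∧ M.card = Mr G r := by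
  rw [Mr_eq_sSup]
  obtain ⟨M, hM, hcard⟩ := Nat.sSup_mem (s := {m | ∃ M, IsStarPacking G r M ∧ m = M.card})
    ⟨0, ∅, ⟨by simp, by simp⟩, rfl⟩ ⟨_, fun _ ⟨M', _, hm⟩ => hm ▸ M'.card_le_univ⟩
  exact ⟨M, hM, hcard.symm⟩

theorem deg_filter_disjoint_packingVtx_lt {G : Finset (Finset V)} {r : ℝ} (hr : 0 < r)
    {M : Finset (V × Finset (Finset V))} (hM : IsStarPacking G r M) (hmax : M.card = Mr G r)
    (v : V) : deg (G.filter fun e => Disjoint e (packingVtx M)) v < ⌈r⌉₊ := by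
  by_contra! hdeg
  obtain ⟨W, hWsub, hWcard⟩ := Finset.exists_subset_card_eq hdeg
  have hWG : ∀ e ∈ W, (e ∈ G ∧ Disjoint e (packingVtx M)) ∧ v ∈ e := by
    simpa only [Finset.subset_iff, Finset.mem_filter] using hWsub
  have hWU : Disjoint (starVtx W) (packingVtx M) := by
    rw [starVtx, Finset.disjoint_sup_left]
    exact fun e he => (hWG e he).1.2
  have hvW : v ∈ starVtx W := by
    obtain ⟨e, he⟩ : W.Nonempty := by rw [← Finset.card_pos, hWcard]; exact Nat.ceil_pos.mpr hr
    exact Finset.mem_sup.mpr ⟨e, he, (hWG e he).2⟩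
  have hnew : (v, W) ∉ M := fun hmem =>
    Finset.disjoint_left.mp hWU hvW (starVtx_subset_packingVtx hmem hvW)
  have hins := card_le_Mr (hM.insert
    (fun e he => Finset.mem_filter.mpr ⟨(hWG e he).1.1, (hWG e he).2⟩) hWcard hWU)
  rw [Finset.card_insert_of_notMem hnew] at hins
  omega

theorem deg_le_maxDeg (G : Finset (Finset V)) (v : V) : deg G v ≤ maxDeg G :=
  Finset.le_sup (f := deg G) (Finset.mem_univ v)

theorem card_le_card_filter_disjoint_add (G : Finset (Finset V)) (U : Finset V) :
    G.card ≤ (G.filter fun e => Disjoint e U).card + U.card * maxDeg G := by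
  rw [← Finset.card_filter_add_card_filter_not (fun e => Disjoint e U) (s := G)]
  gcongr
  have hmeet : G.filter (fun e => ¬Disjoint e U) ⊆ U.biUnion fun u => G.filter fun e => u ∈ e := by
    intro e he
    rw [Finset.mem_filter] at he
    obtain ⟨u, hue, huU⟩ := Finset.not_disjoint_iff.mp he.2
    exact Finset.mem_biUnion.mpr ⟨u, huU, Finset.mem_filter.mpr ⟨he.1, hue⟩⟩
  exact (Finset.card_le_card hmeet).trans
    (Finset.card_biUnion_le_card_mul _ _ _ fun u _ => deg_le_maxDeg G u)

end

theorem statement10_general (k : ℕ) (V : Type) [Fintype V] (H : Finset (Finset V))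
    (hH : ∀ e ∈ H, e.card ≤ k)
    (r : ℝ) (hr : 0 < r) (ω : V → Bool) :
    Xr H r ω ≤ XE H ω ∧
    XE H ω ≤ Xr H r ω +
      (if r < (maxDeg (HpEdges H ω) : ℝ) then (1:ℝ) else 0) *
        (k : ℝ) * (Nat.ceil r : ℝ) * (Mr (HpEdges H ω) r : ℝ) *
        (maxDeg (HpEdges H ω) : ℝ) := by
  refine ⟨Xr_le_XE H r ω, ?_⟩
  set Hp := HpEdges H ω
  split_ifs with hΔ
  · obtain ⟨M, hM, hMr⟩ := exists_isStarPacking_card_eq_Mr Hp r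
    have hsparse := card_le_Xr (Finset.filter_subset _ _)
      fun v => (Nat.lt_ceil.mp (deg_filter_disjoint_packingVtx_lt hr hM hMr v)).le
    have hU := card_packingVtx_le hM fun e he => hH e (HpEdges_subset H ω he)
    have hcount : Hp.card ≤ (Hp.filter fun e => Disjoint e (packingVtx M)).card +
        Mr Hp r * (⌈r⌉₊ * k) * maxDeg Hp :=
      (card_le_card_filter_disjoint_add Hp _).trans (by rw [← hMr]; gcongr)
    have hcountℝ := (Nat.cast_le (α := ℝ)).mpr hcount
    push_cast at hcountℝ
    rw [XE]
    linarith
  · have := card_le_Xr (subset_refl Hp) fun v =>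
      (Nat.cast_le.mpr (deg_le_maxDeg Hp v)).trans (not_lt.mp hΔ)
    rw [XE]
    linarith

/-- Lemma 3.3 (basic sparsification inequality), pointwise. -/
theorem statement10 (k : ℕ) (V : Type) [Fintype V] (H : Finset (Finset V))
    (hH : ∀ e ∈ H, e.card ≤ k) (p : ℝ) (hp0 : 0 ≤ p) (hp1 : p ≤ 1)
    (r : ℝ) (hr : 0 < r) (ω : V → Bool) :
    Xr H r ω ≤ XE H ω ∧
    XE H ω ≤ Xr H r ω +
      (if r < (maxDeg (HpEdges H ω) : ℝ) then (1:ℝ) else 0) *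
        (k : ℝ) * (Nat.ceil r : ℝ) * (Mr (HpEdges H ω) r : ℝ) *
        (maxDeg (HpEdges H ω) : ℝ) :=
  statement10_general k V H hH r hr ω

end UT
end
end

section
/- Given any hypergraph H, set X = e(H_p) and μ = E X. For all D ≥ 1, p ∈ (0,1] and t ≥ 0 such that property 𝔛(H, D, μ+t) holds and μ + t ≥ 1, one has Pr(X ≥ μ + t) ≥ exp(−D·√(μ+t)·log(1/p)). -/
open MeasureTheory Real
open scoped ENNReal Classical

noncomputable section

namespace UT

/-!
If every vertex of the witness set `W` of `𝔛(H, D, μ + t)` is kept, which happens with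
probability `p ^ |W|`, then `H_p` contains the at least `μ + t` edges of `H[W]`. Since
`μ + t ≥ 1`, `|W| ≤ D √(μ + t)`, and `p ^ |W| ≥ p ^ (D √(μ + t)) = exp (−D √(μ + t) log (1/p))`.
-/

lemma bern_singleton_true {p : ℝ} (hp : p ≤ 1) : bern p {true} = ENNReal.ofReal p := by
  rw [bern, PMF.toMeasure_apply_singleton _ _ (measurableSet_singleton _)]
  change ((min p.toNNReal 1 : NNReal) : ℝ≥0∞) = ENNReal.ofReal p
  rw [min_eq_left (Real.toNNReal_le_one.mpr hp)]
  rfl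

instance (V : Type) [Fintype V] (p : ℝ) : IsProbabilityMeasure (perc V p) := by
  unfold perc; infer_instance

lemma perc_forall_mem_true {V : Type} [Fintype V] {p : ℝ} (hp : p ≤ 1) (W : Finset V) :
    perc V p {ω | ∀ v ∈ W, ω v = true} = ENNReal.ofReal p ^ W.card := by
  have hcyl : {ω : V → Bool | ∀ v ∈ W, ω v = true} = (W : Set V).pi fun _ => {true} := by
    ext ω; simp
  rw [perc, hcyl, Measure.pi_pi_finset, Finset.prod_congr rfl fun _ _ => bern_singleton_true hp,
    Finset.prod_const]

lemma filter_subset_subset_HpEdges {V : Type} (H : Finset (Finset V)) {W : Finset V}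
    {ω : V → Bool} (hω : ∀ v ∈ W, ω v = true) : H.filter (fun e => e ⊆ W) ⊆ HpEdges H ω :=
  Finset.monotone_filter_right H fun _ _ he v hv => hω v (he hv)

lemma pow_card_le_pr {V : Type} [Fintype V] (H : Finset (Finset V)) {p c : ℝ} (hp0 : 0 ≤ p)
    (hp1 : p ≤ 1) {W : Finset V} (hW : c ≤ ((H.filter fun e => e ⊆ W).card : ℝ)) :
    p ^ W.card ≤ pr H p c := by
  have hevent : {ω : V → Bool | ∀ v ∈ W, ω v = true} ⊆ {ω | c ≤ XE H ω} := fun ω hω =>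
    hW.trans <| Nat.cast_le.mpr <| Finset.card_le_card <| filter_subset_subset_HpEdges H hω
  calc p ^ W.card = (perc V p {ω | ∀ v ∈ W, ω v = true}).toReal := by
        rw [perc_forall_mem_true hp1, ENNReal.toReal_pow, ENNReal.toReal_ofReal hp0]
    _ ≤ pr H p c := ENNReal.toReal_mono (measure_ne_top _ _) (measure_mono hevent)

lemma exp_neg_mul_log_one_div {p : ℝ} (hp : 0 < p) (x : ℝ) :
    Real.exp (-(x * Real.log (1 / p))) = p ^ x := by
  rw [Real.rpow_def_of_pos hp, one_div, Real.log_inv]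
  ring_nf

theorem statement15_general (V : Type) [Fintype V] (H : Finset (Finset V)) (D : ℝ)
    (p : ℝ) (hp0 : 0 < p) (hp1 : p ≤ 1) (t : ℝ)
    (hX : propX H D (mu H p + t)) (h1 : 1 ≤ mu H p + t) :
    Real.exp (-(D * Real.sqrt (mu H p + t) * Real.log (1/p))) ≤ pr H p (mu H p + t) := by
  obtain ⟨W, hWcard, hWedges⟩ := hX
  have hsqrt : max (Real.sqrt (mu H p + t)) 1 = Real.sqrt (mu H p + t) :=
    max_eq_left (Real.one_le_sqrt.mpr h1)
  rw [hsqrt] at hWcard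
  calc Real.exp (-(D * Real.sqrt (mu H p + t) * Real.log (1/p)))
      = p ^ (D * Real.sqrt (mu H p + t)) := exp_neg_mul_log_one_div hp0 _
    _ ≤ p ^ (W.card : ℝ) := Real.rpow_le_rpow_of_exponent_ge hp0 hp1 hWcard
    _ = p ^ W.card := Real.rpow_natCast p W.card
    _ ≤ pr H p (mu H p + t) := pow_card_le_pr H hp0.le hp1 hWedges

/-- Theorem 4.1: lower bound via clustered configurations. -/
theorem statement15 (V : Type) [Fintype V] (H : Finset (Finset V)) (D : ℝ) (hD : 1 ≤ D)
    (p : ℝ) (hp0 : 0 < p) (hp1 : p ≤ 1) (t : ℝ) (ht : 0 ≤ t)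
    (hX : propX H D (mu H p + t)) (h1 : 1 ≤ mu H p + t) :
    Real.exp (-(D * Real.sqrt (mu H p + t) * Real.log (1/p))) ≤ pr H p (mu H p + t) :=
  statement15_general V H D p hp0 hp1 t hX h1

end UT
end
end
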